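/- Let d ≥ 1 and p ≥ 1, and let G₁, G₂ be Borel probability measures on ℝ^d × S_d^{++}(ℝ). Suppose there exists (μ₀,Σ₀) ∈ ℝ^d × S_d^{++}(ℝ) such that ∫ d_S((μ,Σ),(μ₀,Σ₀))^p dG₁(μ,Σ) < ∞ and ∫ d_S((μ₀,Σ₀),(μ,Σ))^p dG₂(μ,Σ) < ∞, where d_S((μ₁,Σ₁),(μ₂,Σ₂)) = sqrt( ‖μ₁−μ₂‖₂² + (1/4)·(sup_{‖u‖₂=1} |log((uᵀΣ₁u)/(uᵀΣ₂u))|)² ). Then SMix-W_p^p(G₁,G₂) < ∞. -/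

import Mathlib

open MeasureTheory ProbabilityTheory Matrix ENNReal
open scoped RealInnerProductSpace

noncomputable section

namespace PaperSOT

/-- `ℝ^d` with the Euclidean norm. -/
abbrev E (d : ℕ) := EuclideanSpace ℝ (Fin d)

/-- real `d × d` matrices. -/
abbrev Mat (d : ℕ) := Matrix (Fin d) (Fin d) ℝ

instance (d : ℕ) : MeasurableSpace (Mat d) :=
  (inferInstance : MeasurableSpace (Fin d → Fin d → ℝ))

/-- squared Frobenius norm `‖A‖_F² = Tr(Aᵀ A)`. -/
def frobSq {d : ℕ} (A : Mat d) : ℝ := (Aᵀ * A).trace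

/-- Frobenius norm `‖A‖_F = sqrt (Tr (Aᵀ A))`. -/
def frobNorm {d : ℕ} (A : Mat d) : ℝ := Real.sqrt (frobSq A)

/-- the (unique, when it exists) symmetric logarithm of a matrix: for a symmetric
positive definite `Σ` this is the unique symmetric `S` with `exp S = Σ`. -/
def symLog {d : ℕ} (M : Mat d) : Mat d := by
  classical exact if h : ∃ S : Mat d, S.IsSymm ∧ NormedSpace.exp S = M then h.choose else 0

/-- `π` is a coupling of `μ` and `ν`: its marginals are `μ` and `ν`. -/
def IsCoupling {X Y : Type*} [MeasurableSpace X] [MeasurableSpace Y]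
    (π : Measure (X × Y)) (μ : Measure X) (ν : Measure Y) : Prop :=
  π.map Prod.fst = μ ∧ π.map Prod.snd = ν

/-- the Wasserstein-`p` cost `W_p^p` between two measures on `ℝ`:
the infimum over couplings of `∫ |x-y|^p dπ`. -/
def Wp (p : ℝ) (ν₁ ν₂ : Measure ℝ) : ℝ≥0∞ :=
  ⨅ (π : Measure (ℝ × ℝ)) (_ : IsCoupling π ν₁ ν₂),
    ∫⁻ z, ENNReal.ofReal (|z.1 - z.2| ^ p) ∂π

/-- the standard Gaussian measure on `ℝ^d`. -/
def stdGaussianE (d : ℕ) : Measure (E d) :=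
  (Measure.pi fun _ : Fin d => gaussianReal 0 1).map
    (MeasurableEquiv.toLp 2 (Fin d → ℝ))

/-- the uniform probability distribution on the unit sphere of `ℝ^d`,
realized as the law of a normalized standard Gaussian vector. -/
def unifSphere (d : ℕ) : Measure (E d) :=
  (stdGaussianE d).map (fun x => ‖x‖⁻¹ • x)

/-- the standard Gaussian measure on `d × d` matrices (i.i.d. standard normal entries). -/
def stdGaussianMat (d : ℕ) : Measure (Mat d) :=
  (Measure.pi fun _ : Fin d => Measure.pi fun _ : Fin d => gaussianReal 0 1 :
    Measure (Fin d → Fin d → ℝ)).map (fun g => (Matrix.of g : Mat d))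

/-- the uniform probability distribution on the unit Frobenius sphere of the space of
real symmetric `d × d` matrices, realized as the law of a Frobenius-normalized isotropic
Gaussian symmetric matrix. -/
def unifSymSphere (d : ℕ) : Measure (Mat d) :=
  (stdGaussianMat d).map (fun g =>
    (frobNorm ((2:ℝ)⁻¹ • (g + gᵀ)))⁻¹ • ((2:ℝ)⁻¹ • (g + gᵀ)))

/-- the space `S_d^{++}(ℝ)` of real symmetric positive definite `d × d` matrices. -/
abbrev PDMat (d : ℕ) := {M : Mat d // M.PosDef}

/-- the quadratic form `vᵀ M v`. -/
def quad {d : ℕ} (v : E d) (M : Mat d) : ℝ := ∑ i, ∑ j, v i * M i j * v j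

/-- the generalized geodesic projection
`P_{V_w}(μ, Σ) = w₁ ⟨μ, v⟩ + w₂ Tr(A log Σ)` on `ℝ^d × S_d^{++}(ℝ)`. -/
def projMix {d : ℕ} (w : E 2) (v : E d) (A : Mat d) (x : E d × PDMat d) : ℝ :=
  w 0 * ⟪x.1, v⟫ + w 1 * (A * symLog x.2.1).trace

/-- the mixed sliced Wasserstein distance (raised to the power `p`),
`Mix-SW_p^p(G₁,G₂) = ∫ W_p^p(P_{V_w}♯G₁, P_{V_w}♯G₂) dσ(w,v,A)`, where `σ` is the product
of the uniform distributions on the unit circle, the unit sphere of `ℝ^d` and the unit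
Frobenius sphere of symmetric `d × d` matrices. -/
def MixSW (d : ℕ) (p : ℝ) (G₁ G₂ : Measure (E d × PDMat d)) : ℝ≥0∞ :=
  ∫⁻ w, ∫⁻ v, ∫⁻ A,
      Wp p (G₁.map (projMix w v A)) (G₂.map (projMix w v A))
    ∂(unifSymSphere d) ∂(unifSphere d) ∂(unifSphere 2)

/-- the log-Euclidean distance
`d((μ₁,Σ₁),(μ₂,Σ₂)) = sqrt(‖μ₁-μ₂‖² + ‖log Σ₁ - log Σ₂‖_F²)` on `ℝ^d × S_d^{++}(ℝ)`. -/
def dLE {d : ℕ} (x y : E d × PDMat d) : ℝ :=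
  Real.sqrt (‖x.1 - y.1‖ ^ 2 + frobSq (symLog x.2.1 - symLog y.2.1))

/-- the projection `P_{v,w}(μ,Σ) = w₁ ⟨v,μ⟩ + w₂ log √(vᵀ Σ v)` used by the sliced
mixture Wasserstein distance. -/
def projSMix {d : ℕ} (w : E 2) (v : E d) (x : E d × PDMat d) : ℝ :=
  w 0 * ⟪v, x.1⟫ + w 1 * Real.log (Real.sqrt (quad v x.2.1))

/-- the sliced mixture Wasserstein distance (raised to the power `p`),
`SMix-W_p^p(G₁,G₂) = ∫ W_p^p(P_{v,w}♯G₁, P_{v,w}♯G₂) dσ(w,v)`, where `σ` is the product of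
the uniform distributions on the unit circle and on the unit sphere of `ℝ^d`. -/
def SMixW (d : ℕ) (p : ℝ) (G₁ G₂ : Measure (E d × PDMat d)) : ℝ≥0∞ :=
  ∫⁻ w, ∫⁻ v,
      Wp p (G₁.map (projSMix w v)) (G₂.map (projSMix w v))
    ∂(unifSphere d) ∂(unifSphere 2)

/-- the symmetrized log-Rayleigh quantity
`L(Σ₁,Σ₂) = sup_{‖u‖=1} |log (uᵀΣ₁u / uᵀΣ₂u)|`. -/
def logRayleigh {d : ℕ} (S₁ S₂ : Mat d) : ℝ :=
  sSup {r : ℝ | ∃ u : E d, ‖u‖ = 1 ∧ r = |Real.log (quad u S₁ / quad u S₂)|}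

/-- the distance `d_S((μ₁,Σ₁),(μ₂,Σ₂)) = sqrt(‖μ₁-μ₂‖² + (1/4) L(Σ₁,Σ₂)²)`. -/
def dS {d : ℕ} (x y : E d × PDMat d) : ℝ :=
  Real.sqrt (‖x.1 - y.1‖ ^ 2 + (1/4) * (logRayleigh x.2.1 y.2.1) ^ 2)

/-- a measure is finitely supported if some finite set has full measure. -/
def FinSupp {X : Type*} [MeasurableSpace X] (G : Measure X) : Prop :=
  ∃ s : Finset X, G (↑s : Set X)ᶜ = 0

/-- the Gaussian measure `N(m, Σ)` on `ℝ^d` (with `Σ` positive semidefinite), realized as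
the law of `m + Σ^{1/2} Z` for a standard Gaussian vector `Z`. -/
def gaussianE {d : ℕ} (m : E d) {S : Mat d} (hS : S.PosSemidef) : Measure (E d) :=
  (stdGaussianE d).map (fun x =>
    m + (MeasurableEquiv.toLp 2 (Fin d → ℝ)) ((hS.1.eigenvectorUnitary.1 * diagonal (RCLike.ofReal ∘ Real.sqrt ∘ hS.1.eigenvalues) *
      (star hS.1.eigenvectorUnitary : Mat d)).mulVec (fun i => x i)))

section Aux

variable {d : ℕ}

lemma quad_eq_dot (v : E d) (M : Mat d) :
    quad v M = dotProduct (star (v : Fin d → ℝ)) (M *ᵥ (v : Fin d → ℝ)) := by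
  simp only [quad, dotProduct, Matrix.mulVec, Pi.star_apply, star_trivial, Finset.mul_sum]
  refine Finset.sum_congr rfl fun i _ => Finset.sum_congr rfl fun j _ => by ring

lemma quad_pos {M : Mat d} (hM : M.PosDef) {v : E d} (hv : v ≠ 0) : 0 < quad v M := by
  rw [quad_eq_dot]
  exact hM.dotProduct_mulVec_pos (x := (v : Fin d → ℝ)) (by simpa using hv)

lemma continuous_quad (M : Mat d) : Continuous fun u : E d => quad u M := by
  unfold quad
  refine continuous_finset_sum _ fun i _ => continuous_finset_sum _ fun j _ => ?_
  exact (((EuclideanSpace.proj i).continuous.mul continuous_const).mul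
    (EuclideanSpace.proj j).continuous)

lemma le_logRayleigh {S₁ S₂ : Mat d} (h₁ : S₁.PosDef) (h₂ : S₂.PosDef)
    {u : E d} (hu : ‖u‖ = 1) :
    |Real.log (quad u S₁ / quad u S₂)| ≤ logRayleigh S₁ S₂ := by
  have hpos : ∀ (S : Mat d), S.PosDef → ∀ x ∈ Metric.sphere (0 : E d) 1, 0 < quad x S := by
    intro S hS x hx
    refine quad_pos hS ?_
    intro h
    rw [mem_sphere_zero_iff_norm, h, norm_zero] at hx
    exact one_ne_zero hx.symm
  have hset : {r : ℝ | ∃ u : E d, ‖u‖ = 1 ∧ r = |Real.log (quad u S₁ / quad u S₂)|}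
      = (fun u : E d => |Real.log (quad u S₁ / quad u S₂)|) '' Metric.sphere 0 1 := by
    ext r
    simp only [Set.mem_setOf_eq, Set.mem_image, mem_sphere_zero_iff_norm]
    exact ⟨fun ⟨u, hu, hr⟩ => ⟨u, hu, hr.symm⟩, fun ⟨u, hu, hr⟩ => ⟨u, hu, hr.symm⟩⟩
  have hbdd : BddAbove {r : ℝ | ∃ u : E d, ‖u‖ = 1 ∧ r = |Real.log (quad u S₁ / quad u S₂)|} := by
    rw [hset]
    refine ((isCompact_sphere (0 : E d) 1).image_of_continuousOn ?_).bddAbove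
    refine ContinuousOn.abs (ContinuousOn.log ?_ ?_)
    · exact ((continuous_quad S₁).continuousOn.div (continuous_quad S₂).continuousOn
        fun x hx => (hpos S₂ h₂ x hx).ne')
    · exact fun x hx => (div_pos (hpos S₁ h₁ x hx) (hpos S₂ h₂ x hx)).ne'
  exact le_csSup hbdd ⟨u, hu, rfl⟩

lemma add_le_sqrt_two_mul (a b : ℝ) (ha : 0 ≤ a) (hb : 0 ≤ b) :
    a + b ≤ Real.sqrt 2 * Real.sqrt (a ^ 2 + b ^ 2) := by
  rw [← Real.sqrt_mul (by norm_num : (0:ℝ) ≤ 2)]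
  calc a + b = Real.sqrt ((a + b) ^ 2) := (Real.sqrt_sq (by positivity)).symm
    _ ≤ Real.sqrt (2 * (a ^ 2 + b ^ 2)) := Real.sqrt_le_sqrt (by nlinarith [sq_nonneg (a - b)])

end Aux
section Aux2
variable {d : ℕ}

lemma dS_nonneg (x y : E d × PDMat d) : 0 ≤ dS x y := Real.sqrt_nonneg _

lemma projSMix_dist_le (w : E 2) (v : E d)
    (hw0 : |w 0| ≤ 1) (hw1 : |w 1| ≤ 1) (hv : ‖v‖ = 1 ∨ v = 0)
    (x y x₀ : E d × PDMat d) :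
    |projSMix w v x - projSMix w v y| ≤ Real.sqrt 2 * (dS x x₀ + dS x₀ y) := by
  rcases hv with hv | rfl
  · have hv0 : v ≠ 0 := by
      intro h; rw [h, norm_zero] at hv; exact one_ne_zero hv.symm
    have hq : ∀ z : E d × PDMat d, 0 < quad v z.2.1 := fun z => quad_pos z.2.2 hv0
    set A := ⟪v, x.1 - x₀.1⟫ with hA_def
    set A' := ⟪v, x₀.1 - y.1⟫ with hA'_def
    set Lx := Real.log (quad v x.2.1) - Real.log (quad v x₀.2.1) with hLx_def
    set Ly := Real.log (quad v x₀.2.1) - Real.log (quad v y.2.1) with hLy_def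
    have e : projSMix w v x - projSMix w v y = w 0 * (A + A') + w 1 * ((Lx + Ly) / 2) := by
      simp only [projSMix, Real.log_sqrt (hq x).le, Real.log_sqrt (hq y).le,
        hA_def, hA'_def, hLx_def, hLy_def, inner_sub_right]
      ring
    have h1 : |w 0 * (A + A')| ≤ |A| + |A'| := by
      rw [abs_mul]
      exact le_trans (mul_le_of_le_one_left (abs_nonneg _) hw0) (abs_add_le _ _)
    have h2 : |w 1 * ((Lx + Ly) / 2)| ≤ (|Lx| + |Ly|) / 2 := by
      rw [abs_mul]
      refine le_trans (mul_le_of_le_one_left (abs_nonneg _) hw1) ?_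
      rw [abs_div, abs_two]
      gcongr
      exact abs_add_le _ _
    have habs : |projSMix w v x - projSMix w v y| ≤ |A| + |A'| + (|Lx| + |Ly|) / 2 := by
      rw [e]
      calc |w 0 * (A + A') + w 1 * ((Lx + Ly) / 2)|
          ≤ |w 0 * (A + A')| + |w 1 * ((Lx + Ly) / 2)| := abs_add_le _ _
        _ ≤ |A| + |A'| + (|Lx| + |Ly|) / 2 := by linarith
    have hA : |A| ≤ ‖x.1 - x₀.1‖ := by
      simpa [hv] using abs_real_inner_le_norm v (x.1 - x₀.1)
    have hA' : |A'| ≤ ‖x₀.1 - y.1‖ := by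
      simpa [hv] using abs_real_inner_le_norm v (x₀.1 - y.1)
    have hLxr : Lx = Real.log (quad v x.2.1 / quad v x₀.2.1) :=
      (Real.log_div (hq x).ne' (hq x₀).ne').symm
    have hLyr : Ly = Real.log (quad v x₀.2.1 / quad v y.2.1) :=
      (Real.log_div (hq x₀).ne' (hq y).ne').symm
    have hLx : |Lx| ≤ logRayleigh x.2.1 x₀.2.1 := by
      rw [hLxr]; exact le_logRayleigh x.2.2 x₀.2.2 hv
    have hLy : |Ly| ≤ logRayleigh x₀.2.1 y.2.1 := by
      rw [hLyr]; exact le_logRayleigh x₀.2.2 y.2.2 hv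
    have hL0x : 0 ≤ logRayleigh x.2.1 x₀.2.1 := le_trans (abs_nonneg _) hLx
    have hL0y : 0 ≤ logRayleigh x₀.2.1 y.2.1 := le_trans (abs_nonneg _) hLy
    have t1 : ‖x.1 - x₀.1‖ + (1/2) * logRayleigh x.2.1 x₀.2.1 ≤ Real.sqrt 2 * dS x x₀ := by
      have key := add_le_sqrt_two_mul ‖x.1 - x₀.1‖ ((1/2) * logRayleigh x.2.1 x₀.2.1)
        (norm_nonneg _) (by linarith)
      have hrw : ‖x.1 - x₀.1‖ ^ 2 + ((1/2) * logRayleigh x.2.1 x₀.2.1) ^ 2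
          = ‖x.1 - x₀.1‖ ^ 2 + (1/4) * logRayleigh x.2.1 x₀.2.1 ^ 2 := by ring
      rw [hrw] at key
      exact key
    have t2 : ‖x₀.1 - y.1‖ + (1/2) * logRayleigh x₀.2.1 y.2.1 ≤ Real.sqrt 2 * dS x₀ y := by
      have key := add_le_sqrt_two_mul ‖x₀.1 - y.1‖ ((1/2) * logRayleigh x₀.2.1 y.2.1)
        (norm_nonneg _) (by linarith)
      have hrw : ‖x₀.1 - y.1‖ ^ 2 + ((1/2) * logRayleigh x₀.2.1 y.2.1) ^ 2
          = ‖x₀.1 - y.1‖ ^ 2 + (1/4) * logRayleigh x₀.2.1 y.2.1 ^ 2 := by ring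
      rw [hrw] at key
      exact key
    rw [mul_add]
    linarith
  · have h0 : ∀ z : E d × PDMat d, projSMix w (0 : E d) z = 0 := by
      intro z
      simp [projSMix, quad]
    rw [h0, h0, sub_zero, abs_zero]
    exact mul_nonneg (Real.sqrt_nonneg _) (add_nonneg (Real.sqrt_nonneg _) (Real.sqrt_nonneg _))

lemma rpow_add_bound {p : ℝ} (hp : 1 ≤ p) {a b : ℝ} (ha : 0 ≤ a) (hb : 0 ≤ b) :
    (a + b) ^ p ≤ 2 ^ p * (a ^ p + b ^ p) := by
  have hp0 : 0 ≤ p := le_trans zero_le_one hp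
  have h2 : (0:ℝ) ≤ 2 := by norm_num
  rcases le_total a b with h | h
  · calc (a + b) ^ p ≤ (2 * b) ^ p := Real.rpow_le_rpow (by linarith) (by linarith) hp0
      _ = 2 ^ p * b ^ p := Real.mul_rpow h2 hb
      _ ≤ 2 ^ p * (a ^ p + b ^ p) := by
          nlinarith [Real.rpow_nonneg ha p, Real.rpow_nonneg h2 p]
  · calc (a + b) ^ p ≤ (2 * a) ^ p := Real.rpow_le_rpow (by linarith) (by linarith) hp0
      _ = 2 ^ p * a ^ p := Real.mul_rpow h2 ha
      _ ≤ 2 ^ p * (a ^ p + b ^ p) := by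
          nlinarith [Real.rpow_nonneg hb p, Real.rpow_nonneg h2 p]

end Aux2
section Aux3
variable {d : ℕ}

lemma measurable_quad (v : E d) : Measurable fun M : Mat d => quad v M := by
  unfold quad
  refine Finset.measurable_sum _ fun i _ => Finset.measurable_sum _ fun j _ => ?_
  have hMij : Measurable fun M : Mat d => M i j :=
    (measurable_pi_apply j).comp (measurable_pi_apply i)
  exact (hMij.const_mul (v i)).mul_const (v j)

lemma measurable_projSMix (w : E 2) (v : E d) :
    Measurable (projSMix w v : E d × PDMat d → ℝ) := by
  unfold projSMix
  have h1 : Measurable fun x : E d × PDMat d => ⟪v, x.1⟫ :=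
    Measurable.inner measurable_const measurable_fst
  have h2 : Measurable fun x : E d × PDMat d => quad v x.2.1 :=
    (measurable_quad v).comp (measurable_subtype_coe.comp measurable_snd)
  exact (h1.const_mul (w 0)).add
    ((Real.measurable_log.comp (Real.continuous_sqrt.measurable.comp h2)).const_mul (w 1))

instance isProb_stdGaussianE : IsProbabilityMeasure (stdGaussianE d) := by
  unfold stdGaussianE
  exact Measure.isProbabilityMeasure_map (MeasurableEquiv.measurable _).aemeasurable

lemma measurable_normalize : Measurable fun x : E d => ‖x‖⁻¹ • x :=
  (measurable_norm.inv).smul measurable_id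

instance isProb_unifSphere : IsProbabilityMeasure (unifSphere d) := by
  unfold unifSphere
  exact Measure.isProbabilityMeasure_map measurable_normalize.aemeasurable

lemma Wp_le_lintegral_prod (p : ℝ) (ν₁ ν₂ : Measure ℝ)
    [IsProbabilityMeasure ν₁] [IsProbabilityMeasure ν₂] :
    Wp p ν₁ ν₂ ≤ ∫⁻ z, ENNReal.ofReal (|z.1 - z.2| ^ p) ∂(ν₁.prod ν₂) := by
  refine iInf₂_le (ν₁.prod ν₂) ?_
  constructor
  · rw [Measure.map_fst_prod]; simp
  · rw [Measure.map_snd_prod]; simp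

lemma coord_abs_le_norm {n : ℕ} (w : E n) (i : Fin n) : |w i| ≤ ‖w‖ := by
  rw [EuclideanSpace.norm_eq]
  calc |w i| = Real.sqrt (w i ^ 2) := (Real.sqrt_sq_eq_abs _).symm
    _ ≤ Real.sqrt (∑ j, ‖w j‖ ^ 2) := by
        refine Real.sqrt_le_sqrt ?_
        have : (w i) ^ 2 = ‖w i‖ ^ 2 := by rw [Real.norm_eq_abs, sq_abs]
        rw [this]
        exact Finset.single_le_sum (fun j _ => sq_nonneg ‖w j‖) (Finset.mem_univ i)

lemma norm_normalize_le (x : E d) : ‖(‖x‖⁻¹ • x : E d)‖ ≤ 1 := by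
  rw [norm_smul, norm_inv, norm_norm]
  rcases eq_or_ne x 0 with h | h
  · simp [h]
  · rw [inv_mul_cancel₀ (norm_ne_zero_iff.2 h)]

lemma normalize_mem (x : E d) : ‖(‖x‖⁻¹ • x : E d)‖ = 1 ∨ (‖x‖⁻¹ • x : E d) = 0 := by
  rcases eq_or_ne x 0 with h | h
  · right; simp [h]
  · left; rw [norm_smul, norm_inv, norm_norm, inv_mul_cancel₀ (norm_ne_zero_iff.2 h)]

lemma ae_unifSphere_mem :
    ∀ᵐ v ∂(unifSphere d), ‖v‖ = 1 ∨ v = 0 := by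
  unfold unifSphere
  rw [MeasureTheory.ae_map_iff measurable_normalize.aemeasurable]
  · exact Filter.Eventually.of_forall fun x => normalize_mem x
  · exact (measurable_norm (measurableSet_singleton 1)).union (measurableSet_singleton 0)

lemma ae_unifSphere_coord :
    ∀ᵐ w ∂(unifSphere 2), |w 0| ≤ 1 ∧ |w 1| ≤ 1 := by
  unfold unifSphere
  rw [MeasureTheory.ae_map_iff measurable_normalize.aemeasurable]
  · refine Filter.Eventually.of_forall fun x => ?_
    constructor
    · exact le_trans (coord_abs_le_norm _ 0) (norm_normalize_le x)
    · exact le_trans (coord_abs_le_norm _ 1) (norm_normalize_le x)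
  · have h0 : Measurable fun w : E 2 => |w 0| :=
      ((EuclideanSpace.proj (0 : Fin 2)).continuous.measurable).abs
    have h1 : Measurable fun w : E 2 => |w 1| :=
      ((EuclideanSpace.proj (1 : Fin 2)).continuous.measurable).abs
    exact (measurableSet_le h0 measurable_const).inter (measurableSet_le h1 measurable_const)

end Aux3
/-- Proposition 3 of the paper: if `G₁` and `G₂` have finite `p`-th
moments for the symmetrized log-Rayleigh distance `d_S` around some point `(μ₀,Σ₀)`,
then `SMix-W_p^p(G₁,G₂) < ∞`. -/
theorem statement14 (d : ℕ) (hd : 1 ≤ d) (p : ℝ) (hp : 1 ≤ p)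
    (G₁ G₂ : Measure (E d × PDMat d)) [IsProbabilityMeasure G₁] [IsProbabilityMeasure G₂]
    (x₀ : E d × PDMat d)
    (h₁ : ∫⁻ x, ENNReal.ofReal (dS x x₀ ^ p) ∂G₁ < ⊤)
    (h₂ : ∫⁻ x, ENNReal.ofReal (dS x₀ x ^ p) ∂G₂ < ⊤) :
    SMixW d p G₁ G₂ < ⊤ := by
  have hp0 : 0 ≤ p := le_trans zero_le_one hp
  haveI : SigmaFinite G₁ := IsFiniteMeasure.toSigmaFinite G₁
  haveI : SigmaFinite G₂ := IsFiniteMeasure.toSigmaFinite G₂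
  haveI hsf1 : SFinite G₁ := by
    set_option synthInstance.maxHeartbeats 1000000 in infer_instance
  haveI hsf2 : SFinite G₂ := by
    set_option synthInstance.maxHeartbeats 1000000 in infer_instance
  set I₁ := ∫⁻ x, ENNReal.ofReal (dS x x₀ ^ p) ∂G₁ with hI₁
  set I₂ := ∫⁻ x, ENNReal.ofReal (dS x₀ x ^ p) ∂G₂ with hI₂
  set C : ℝ := Real.sqrt 2 ^ p * 2 ^ p with hC
  have hC0 : 0 ≤ C := mul_nonneg (Real.rpow_nonneg (Real.sqrt_nonneg 2) p)
    (Real.rpow_nonneg (by norm_num) p)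
  set K : ℝ≥0∞ := ENNReal.ofReal C * (I₁ + I₂) with hK
  have hKlt : K < ⊤ :=
    ENNReal.mul_lt_top ENNReal.ofReal_lt_top (ENNReal.add_lt_top.2 ⟨h₁, h₂⟩)
  -- the key bound for admissible (w, v)
  have hmain : ∀ w : E 2, ∀ v : E d, (|w 0| ≤ 1 ∧ |w 1| ≤ 1) → (‖v‖ = 1 ∨ v = 0) →
      Wp p (G₁.map (projSMix w v)) (G₂.map (projSMix w v)) ≤ K := by
    intro w v hw hv
    set f : E d × PDMat d → ℝ := projSMix w v with hf_def
    have hf : Measurable f := measurable_projSMix w v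
    haveI : IsProbabilityMeasure (G₁.map f) := Measure.isProbabilityMeasure_map hf.aemeasurable
    haveI : IsProbabilityMeasure (G₂.map f) := Measure.isProbabilityMeasure_map hf.aemeasurable
    have hrp : Measurable fun t : ℝ => t ^ p := (Real.continuous_rpow_const hp0).measurable
    have hF : Measurable fun z : ℝ × ℝ => ENNReal.ofReal (|z.1 - z.2| ^ p) :=
      (hrp.comp (measurable_fst.sub measurable_snd).abs).ennreal_ofReal
    have hFf : Measurable fun z : (E d × PDMat d) × (E d × PDMat d) =>
        ENNReal.ofReal (|f z.1 - f z.2| ^ p) :=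
      (hrp.comp ((hf.comp measurable_fst).sub (hf.comp measurable_snd)).abs).ennreal_ofReal
    -- pointwise bound
    have hpt : ∀ x y : E d × PDMat d, ENNReal.ofReal (|f x - f y| ^ p)
        ≤ ENNReal.ofReal C *
          (ENNReal.ofReal (dS x x₀ ^ p) + ENNReal.ofReal (dS x₀ y ^ p)) := by
      intro x y
      have hreal : |f x - f y| ^ p ≤ C * (dS x x₀ ^ p + dS x₀ y ^ p) := by
        have hd1 : 0 ≤ dS x x₀ := dS_nonneg _ _
        have hd2 : 0 ≤ dS x₀ y := dS_nonneg _ _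
        calc |f x - f y| ^ p
            ≤ (Real.sqrt 2 * (dS x x₀ + dS x₀ y)) ^ p :=
              Real.rpow_le_rpow (abs_nonneg _)
                (projSMix_dist_le w v hw.1 hw.2 hv x y x₀) hp0
          _ = Real.sqrt 2 ^ p * (dS x x₀ + dS x₀ y) ^ p :=
              Real.mul_rpow (Real.sqrt_nonneg 2) (by linarith)
          _ ≤ Real.sqrt 2 ^ p * (2 ^ p * (dS x x₀ ^ p + dS x₀ y ^ p)) := by
              exact mul_le_mul_of_nonneg_left (rpow_add_bound hp hd1 hd2)
                (Real.rpow_nonneg (Real.sqrt_nonneg 2) p)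
          _ = C * (dS x x₀ ^ p + dS x₀ y ^ p) := by rw [hC]; ring
      calc ENNReal.ofReal (|f x - f y| ^ p)
          ≤ ENNReal.ofReal (C * (dS x x₀ ^ p + dS x₀ y ^ p)) := ENNReal.ofReal_le_ofReal hreal
        _ = ENNReal.ofReal C *
            (ENNReal.ofReal (dS x x₀ ^ p) + ENNReal.ofReal (dS x₀ y ^ p)) := by
            rw [ENNReal.ofReal_mul hC0,
              ENNReal.ofReal_add (Real.rpow_nonneg (dS_nonneg _ _) p)
                (Real.rpow_nonneg (dS_nonneg _ _) p)]
    calc Wp p (G₁.map f) (G₂.map f)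
        ≤ ∫⁻ z, ENNReal.ofReal (|z.1 - z.2| ^ p) ∂((G₁.map f).prod (G₂.map f)) :=
          Wp_le_lintegral_prod p _ _
      _ = ∫⁻ z, ENNReal.ofReal (|z.1 - z.2| ^ p)
            ∂((G₁.prod G₂).map (Prod.map f f)) := by
          rw [Measure.map_prod_map _ _ hf hf]
      _ = ∫⁻ z, ENNReal.ofReal (|f z.1 - f z.2| ^ p) ∂(G₁.prod G₂) := by
          rw [lintegral_map hF (hf.prodMap hf)]
          simp only [Prod.map_fst, Prod.map_snd]
      _ = ∫⁻ x, ∫⁻ y, ENNReal.ofReal (|f x - f y| ^ p) ∂G₂ ∂G₁ :=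
          lintegral_prod _ hFf.aemeasurable
      _ ≤ ∫⁻ x, ∫⁻ y, ENNReal.ofReal C *
            (ENNReal.ofReal (dS x x₀ ^ p) + ENNReal.ofReal (dS x₀ y ^ p)) ∂G₂ ∂G₁ :=
          lintegral_mono fun x => lintegral_mono fun y => hpt x y
      _ = ∫⁻ x, ENNReal.ofReal C * (ENNReal.ofReal (dS x x₀ ^ p) + I₂) ∂G₁ := by
          refine lintegral_congr fun x => ?_
          rw [lintegral_const_mul' _ _ ENNReal.ofReal_ne_top,
            lintegral_add_left measurable_const, lintegral_const, measure_univ, mul_one]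
      _ = ENNReal.ofReal C * (I₁ + I₂) := by
          rw [lintegral_const_mul' _ _ ENNReal.ofReal_ne_top,
            lintegral_add_right _ measurable_const, lintegral_const, measure_univ, mul_one]
      _ = K := rfl
  -- integrate the bound
  have hstep : SMixW d p G₁ G₂ ≤ K := by
    unfold SMixW
    calc ∫⁻ w, ∫⁻ v, Wp p (G₁.map (projSMix w v)) (G₂.map (projSMix w v))
          ∂(unifSphere d) ∂(unifSphere 2)
        ≤ ∫⁻ _, K ∂(unifSphere 2) := by
          refine lintegral_mono_ae (ae_unifSphere_coord.mono fun w hw => ?_)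
          calc ∫⁻ v, Wp p (G₁.map (projSMix w v)) (G₂.map (projSMix w v)) ∂(unifSphere d)
              ≤ ∫⁻ _, K ∂(unifSphere d) :=
                lintegral_mono_ae (ae_unifSphere_mem.mono fun v hv => hmain w v hw hv)
            _ = K := by rw [lintegral_const, measure_univ, mul_one]
      _ = K := by rw [lintegral_const, measure_univ, mul_one]
  exact lt_of_le_of_lt hstep hKlt

end PaperSOT
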